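/- arXiv:1510.03378 — 2 statements merged into one kernel-verified Lean document; each statement's English description precedes it below -/
import Mathlib

section
/- Let α > 0 and let (V, P) be a C¹ homogeneous solution of degree −α of the stationary Euler equations on ℝ³ ∖ {0}. If P(x) ≥ 0 for all x ≠ 0, then V and P vanish identically on ℝ³ ∖ {0}. -/
/-!
The radial component `g x = ⟪V x, x⟫` is homogeneous of degree `1 - α`, and by the Euler
equation and Euler's relation for `P` its derivative along the flow is `‖V‖² + 2αP`.
At an extremum `x₀` of `g` on the unit sphere, Lagrange multipliers give
`∇g(x₀) = (1 - α) g(x₀) x₀`, hence `‖V‖² + 2αP = (1 - α) g²` there; combined with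
Cauchy–Schwarz `g² ≤ ‖V‖²` this forces `α (g² + 2P) ≤ 0`, so `g` vanishes at its maximum and
its minimum on the sphere, hence everywhere. Then `‖V‖² + 2αP = 0`, and `P ≥ 0` gives `V = P = 0`.
-/

noncomputable section

open Real MeasureTheory Metric

/-- Three-dimensional Euclidean space. -/
abbrev E3 : Type := EuclideanSpace ℝ (Fin 3)

/-- The `i`-th standard basis vector of `ℝ³`. -/
def e3 (i : Fin 3) : E3 := EuclideanSpace.single i 1

/-- Make a vector in `ℝ³` out of three coordinates. -/
def vec3 (a b c : ℝ) : E3 := (WithLp.equiv 2 (Fin 3 → ℝ)).symm ![a, b, c]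

/-- Divergence of a vector field on `ℝ³`. -/
def div3 (V : E3 → E3) (x : E3) : ℝ := ∑ i, fderiv ℝ V x (e3 i) i

/-- Curl (vorticity) of a vector field on `ℝ³`. -/
def curl3 (V : E3 → E3) (x : E3) : E3 :=
  vec3 (fderiv ℝ V x (e3 1) 2 - fderiv ℝ V x (e3 2) 1)
       (fderiv ℝ V x (e3 2) 0 - fderiv ℝ V x (e3 0) 2)
       (fderiv ℝ V x (e3 0) 1 - fderiv ℝ V x (e3 1) 0)

/-- Cross product on `ℝ³`. -/
def cross3 (u v : E3) : E3 :=
  vec3 (u 1 * v 2 - u 2 * v 1) (u 2 * v 0 - u 0 * v 2) (u 0 * v 1 - u 1 * v 0)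

/-- `(V, P)` is a `C¹` homogeneous solution of degree `-α` of the stationary
Euler equations on `ℝ³ \ {0}`: `V`, `P` are `C¹` away from the origin,
positively homogeneous of degrees `-α` and `-2α` respectively, and
`(V·∇)V + ∇P = 0`, `div V = 0` hold pointwise away from the origin. -/
structure IsHomogEuler (α : ℝ) (V : E3 → E3) (P : E3 → ℝ) : Prop where
  contV : ContDiffOn ℝ 1 V {(0 : E3)}ᶜ
  contP : ContDiffOn ℝ 1 P {(0 : E3)}ᶜ
  homV : ∀ l : ℝ, 0 < l → ∀ x : E3, x ≠ 0 → V (l • x) = l ^ (-α) • V x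
  homP : ∀ l : ℝ, 0 < l → ∀ x : E3, x ≠ 0 → P (l • x) = l ^ (-(2 * α)) * P x
  euler : ∀ x : E3, x ≠ 0 → fderiv ℝ V x (V x) + gradient P x = 0
  divFree : ∀ x : E3, x ≠ 0 → div3 V x = 0

open RealInnerProductSpace Filter Set Topology

section Homogeneous

variable {E F : Type*} [NormedAddCommGroup E] [NormedSpace ℝ E]
  [NormedAddCommGroup F] [NormedSpace ℝ F]

theorem fderiv_apply_self_of_homogeneous {f : E → F} {β : ℝ} {x : E}
    (hf : DifferentiableAt ℝ f x) (hhom : ∀ l : ℝ, 0 < l → f (l • x) = l ^ β • f x) :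
    fderiv ℝ f x x = β • f x := by
  have hray : HasDerivAt (fun l : ℝ => f (l • x)) (fderiv ℝ f x x) 1 := by
    have hsmul : HasDerivAt (fun l : ℝ => l • x) x 1 := by
      simpa using (hasDerivAt_id (1 : ℝ)).smul_const x
    exact HasFDerivAt.comp_hasDerivAt (1 : ℝ) (by rw [one_smul]; exact hf.hasFDerivAt) hsmul
  have hpow : HasDerivAt (fun l : ℝ => l ^ β • f x) (β • f x) 1 := by
    simpa using (hasDerivAt_rpow_const (Or.inl one_ne_zero)).smul_const (f x)
  have heq : (fun l : ℝ => f (l • x)) =ᶠ[𝓝 1] fun l => l ^ β • f x :=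
    (eventually_gt_nhds one_pos).mono fun l hl => hhom l hl
  exact hray.unique (hpow.congr_of_eventuallyEq heq)

theorem eq_zero_of_homogeneous_of_eq_zero_on_sphere {f : E → F} {β : ℝ}
    (hhom : ∀ l : ℝ, 0 < l → ∀ x : E, x ≠ 0 → f (l • x) = l ^ β • f x)
    (hsphere : ∀ y ∈ sphere (0 : E) 1, f y = 0) {x : E} (hx : x ≠ 0) : f x = 0 := by
  have hn : 0 < ‖x‖ := norm_pos_iff.2 hx
  have hu : ‖x‖⁻¹ • x ∈ sphere (0 : E) 1 := by simp [norm_smul, hn.ne']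
  calc f x = f (‖x‖ • ‖x‖⁻¹ • x) := by rw [smul_inv_smul₀ hn.ne']
    _ = 0 := by rw [hhom _ hn _ (ne_of_mem_sphere hu one_ne_zero), hsphere _ hu, smul_zero]

end Homogeneous

theorem IsCompact.eq_zero_of_isLocalExtrOn {X : Type*} [TopologicalSpace X] {K : Set X}
    {g : X → ℝ} (hK : IsCompact K) (hg : ContinuousOn g K)
    (hextr : ∀ x ∈ K, IsLocalExtrOn g K x → g x = 0) : ∀ x ∈ K, g x = 0 := by
  intro x hx
  obtain ⟨xmax, hxmax, hmax⟩ := hK.exists_isMaxOn ⟨x, hx⟩ hg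
  obtain ⟨xmin, hxmin, hmin⟩ := hK.exists_isMinOn ⟨x, hx⟩ hg
  have hgmax : g xmax = 0 := hextr xmax hxmax (Or.inr hmax.localize)
  have hgmin : g xmin = 0 := hextr xmin hxmin (Or.inl hmin.localize)
  exact le_antisymm (hgmax ▸ hmax hx) (hgmin ▸ hmin hx)

theorem IsLocalExtrOn.apply_eq_mul_inner_of_sphere {E : Type*} [NormedAddCommGroup E]
    [InnerProductSpace ℝ E] [CompleteSpace E] {g : E → ℝ} {g' : E →L[ℝ] ℝ} {x₀ : E}
    (hextr : IsLocalExtrOn g (sphere 0 1) x₀) (hx₀ : x₀ ∈ sphere (0 : E) 1)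
    (hg : HasStrictFDerivAt g g' x₀) (v : E) : g' v = g' x₀ * ⟪x₀, v⟫ := by
  have hsphere : sphere (0 : E) 1 = {y | ‖y‖ ^ 2 = ‖x₀‖ ^ 2} := by
    ext y
    rw [mem_sphere_zero_iff_norm, mem_ofPred_eq, mem_sphere_zero_iff_norm.1 hx₀, one_pow,
      pow_eq_one_iff_of_nonneg (norm_nonneg y) two_ne_zero]
  obtain ⟨a, b, hab, hsum⟩ :=
    (hsphere ▸ hextr).exists_multipliers_of_hasStrictFDerivAt_1d (hasStrictFDerivAt_norm_sq x₀) hg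
  have hlin : ∀ w, 2 * a * ⟪x₀, w⟫ + b * g' w = 0 := fun w => by
    have := DFunLike.congr_fun hsum w
    simp only [add_apply, smul_apply, innerSL_apply_apply,
      zero_apply, smul_eq_mul, nsmul_eq_mul, Nat.cast_ofNat] at this
    linarith
  have hx₀x₀ : ⟪x₀, x₀⟫ = 1 := by simp [mem_sphere_zero_iff_norm.1 hx₀]
  have hb : b ≠ 0 := by
    rintro rfl
    have := hlin x₀
    rw [hx₀x₀, zero_mul, add_zero] at this
    exact hab (by simp only [Prod.mk_eq_zero, and_true]; linarith)
  have h1 := hlin v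
  have h2 := hlin x₀
  rw [hx₀x₀] at h2
  apply mul_left_cancel₀ hb
  linear_combination h1 - ⟪x₀, v⟫ * h2

namespace IsHomogEuler

variable {α : ℝ} {V : E3 → E3} {P : E3 → ℝ}

theorem contDiffAt_velocity (h : IsHomogEuler α V P) {x : E3} (hx : x ≠ 0) :
    ContDiffAt ℝ 1 V x :=
  h.contV.contDiffAt (isOpen_compl_singleton.mem_nhds hx)

theorem contDiffAt_pressure (h : IsHomogEuler α V P) {x : E3} (hx : x ≠ 0) :
    ContDiffAt ℝ 1 P x :=
  h.contP.contDiffAt (isOpen_compl_singleton.mem_nhds hx)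

theorem fderiv_pressure_apply_self (h : IsHomogEuler α V P) {x : E3} (hx : x ≠ 0) :
    fderiv ℝ P x x = -(2 * α) * P x :=
  fderiv_apply_self_of_homogeneous ((h.contDiffAt_pressure hx).differentiableAt one_ne_zero)
    fun l hl => h.homP l hl x hx

theorem inner_velocity_smul (h : IsHomogEuler α V P) {l : ℝ} (hl : 0 < l) {x : E3}
    (hx : x ≠ 0) : ⟪V (l • x), l • x⟫ = l ^ (1 - α) * ⟪V x, x⟫ := by
  rw [h.homV l hl x hx, real_inner_smul_left, real_inner_smul_right, sub_eq_neg_add,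
    Real.rpow_add hl, Real.rpow_one]
  ring

theorem fderiv_inner_velocity_apply_velocity (h : IsHomogEuler α V P) {x : E3} (hx : x ≠ 0) :
    fderiv ℝ (fun y => ⟪V y, y⟫) x (V x) = ‖V x‖ ^ 2 + 2 * α * P x := by
  have hE : fderiv ℝ V x (V x) = -gradient P x := eq_neg_of_add_eq_zero_left (h.euler x hx)
  rw [fderiv_inner_apply ℝ ((h.contDiffAt_velocity hx).differentiableAt one_ne_zero)
    differentiableAt_fun_id, hE, inner_neg_left, inner_gradient_left,
    h.fderiv_pressure_apply_self hx, fderiv_fun_id, ContinuousLinearMap.id_apply,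
    real_inner_self_eq_norm_sq]
  ring

theorem norm_sq_add_pressure_eq_of_isLocalExtrOn (h : IsHomogEuler α V P) {x₀ : E3}
    (hx₀ : x₀ ∈ sphere (0 : E3) 1) (hextr : IsLocalExtrOn (fun y => ⟪V y, y⟫) (sphere 0 1) x₀) :
    ‖V x₀‖ ^ 2 + 2 * α * P x₀ = (1 - α) * ⟪V x₀, x₀⟫ ^ 2 := by
  have hx₀0 : x₀ ≠ 0 := ne_of_mem_sphere hx₀ one_ne_zero
  have hg : ContDiffAt ℝ 1 (fun y => ⟪V y, y⟫) x₀ :=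
    (h.contDiffAt_velocity hx₀0).inner ℝ contDiffAt_id
  have hradial : fderiv ℝ (fun y => ⟪V y, y⟫) x₀ x₀ = (1 - α) * ⟪V x₀, x₀⟫ :=
    fderiv_apply_self_of_homogeneous (hg.differentiableAt one_ne_zero)
      fun l hl => h.inner_velocity_smul hl hx₀0
  rw [← h.fderiv_inner_velocity_apply_velocity hx₀0,
    hextr.apply_eq_mul_inner_of_sphere hx₀ (hg.hasStrictFDerivAt one_ne_zero), hradial,
    real_inner_comm]
  ring

theorem inner_velocity_eq_zero_of_isLocalExtrOn (h : IsHomogEuler α V P) (hα : 0 < α)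
    {x₀ : E3} (hP : 0 ≤ P x₀) (hx₀ : x₀ ∈ sphere (0 : E3) 1)
    (hextr : IsLocalExtrOn (fun y => ⟪V y, y⟫) (sphere 0 1) x₀) : ⟪V x₀, x₀⟫ = 0 := by
  have hid := h.norm_sq_add_pressure_eq_of_isLocalExtrOn hx₀ hextr
  have hCS : ⟪V x₀, x₀⟫ ^ 2 ≤ ‖V x₀‖ ^ 2 := by
    have := abs_real_inner_le_norm (V x₀) x₀
    rw [mem_sphere_zero_iff_norm.1 hx₀, mul_one] at this
    exact sq_le_sq' (neg_le_of_abs_le this) (le_of_abs_le this)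
  have hneg : α * (⟪V x₀, x₀⟫ ^ 2 + 2 * P x₀) ≤ 0 := by linear_combination hid + hCS
  have hsq : ⟪V x₀, x₀⟫ ^ 2 = 0 := by nlinarith [sq_nonneg ⟪V x₀, x₀⟫]
  exact pow_eq_zero_iff two_ne_zero |>.1 hsq

theorem inner_velocity_eq_zero (h : IsHomogEuler α V P) (hα : 0 < α)
    (hP : ∀ x : E3, x ≠ 0 → 0 ≤ P x) {x : E3} (hx : x ≠ 0) : ⟪V x, x⟫ = 0 := by
  have hcont : ContinuousOn (fun y => ⟪V y, y⟫) (sphere (0 : E3) 1) := fun y hy =>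
    ((h.contDiffAt_velocity (ne_of_mem_sphere hy one_ne_zero)).continuousAt.inner
      continuousAt_id).continuousWithinAt
  have hsphere : ∀ y ∈ sphere (0 : E3) 1, ⟪V y, y⟫ = 0 :=
    (isCompact_sphere 0 1).eq_zero_of_isLocalExtrOn hcont fun y hy hextr =>
      h.inner_velocity_eq_zero_of_isLocalExtrOn hα (hP y (ne_of_mem_sphere hy one_ne_zero))
        hy hextr
  exact eq_zero_of_homogeneous_of_eq_zero_on_sphere
    (fun l hl y hy => h.inner_velocity_smul hl hy) hsphere hx

end IsHomogEuler

/-- for `α > 0`, nonnegative pressure forces the solution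
to be trivial. -/
theorem stmt8 (α : ℝ) (hα : 0 < α) (V : E3 → E3) (P : E3 → ℝ)
    (h : IsHomogEuler α V P) (hP : ∀ x : E3, x ≠ 0 → 0 ≤ P x) :
    ∀ x : E3, x ≠ 0 → V x = 0 ∧ P x = 0 := by
  intro x hx
  have hflat : fderiv ℝ (fun y => ⟪V y, y⟫) x = 0 := by
    have hev : (fun y => ⟪V y, y⟫) =ᶠ[𝓝 x] fun _ => (0 : ℝ) :=
      eventually_of_mem (isOpen_compl_singleton.mem_nhds hx) fun y hy =>
        h.inner_velocity_eq_zero hα hP hy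
    rw [hev.fderiv_eq, fderiv_const_apply]
  have hzero : ‖V x‖ ^ 2 + 2 * α * P x = 0 := by
    rw [← h.fderiv_inner_velocity_apply_velocity hx, hflat, zero_apply]
  obtain ⟨hV, hP'⟩ :=
    (add_eq_zero_iff_of_nonneg (sq_nonneg _) (by have := hP x hx; positivity)).1 hzero
  exact ⟨norm_eq_zero.1 (pow_eq_zero_iff two_ne_zero |>.1 hV),
    (mul_eq_zero.1 hP').resolve_left (by positivity)⟩
end
end

section
/- Let (V, P) be a C¹ homogeneous solution of degree −α of the stationary Euler equations on ℝ³ ∖ {0} that is radial, i.e. V(x) × x = 0 for all x ≠ 0. If V is not identically zero, then α = 2 and there is a nonzero constant κ ∈ ℝ such that V(x) = κ x/|x|³ and P(x) = −κ²/(2|x|⁴) for all x ≠ 0. -/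
noncomputable section

open Real MeasureTheory Metric

/-!
Write `V x = f x • x` with `f = radialProfile V`. Since `f` is homogeneous of degree `-α - 1`,
Euler's identity gives `Df(x) x = -(α + 1) f x`, so `div V = 3 f + Df(x) x = (2 - α) f` and
`α = 2`. Then `(V·∇)V = f · DV(x) x = -2 f² x`, so `∇P = 2 f² x` is radial; pairing it with `x`
and using Euler's identity for `P` gives `P = -f² |x|² / 2`. Hence `∇P = -4 P x / |x|²`, which
makes `P |x|⁴` constant on the connected set `ℝ³ ∖ {0}`. So `(f |x|³)²` is constant, and a
continuous function with constant square on a connected set is constant.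
-/

open scoped RealInnerProductSpace Topology

theorem fderiv_apply_self_of_homogeneous_s19 {E F : Type*} [NormedAddCommGroup E] [NormedSpace ℝ E]
    [NormedAddCommGroup F] [NormedSpace ℝ F] {W : E → F} {x : E} (β : ℝ)
    (hW : DifferentiableAt ℝ W x) (hom : ∀ l : ℝ, 0 < l → W (l • x) = l ^ β • W x) :
    fderiv ℝ W x x = β • W x := by
  have hline : HasDerivAt (fun l : ℝ => W (l • x)) (fderiv ℝ W x x) 1 := by
    have hW' : HasFDerivAt W (fderiv ℝ W x) ((1 : ℝ) • x) := by
      rw [one_smul]; exact hW.hasFDerivAt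
    exact hW'.comp_hasDerivAt 1 (by simpa using (hasDerivAt_id (1 : ℝ)).smul_const x)
  have hpow : HasDerivAt (fun l : ℝ => l ^ β • W x) (β • W x) 1 := by
    simpa using (Real.hasDerivAt_rpow_const (p := β) (Or.inl one_ne_zero)).smul_const (W x)
  refine hline.unique (hpow.congr_of_eventuallyEq ?_)
  filter_upwards [eventually_gt_nhds zero_lt_one] with l hl
  exact hom l hl

theorem IsPreconnected.eq_of_sq_eq_const {X : Type*} [TopologicalSpace X] {s : Set X}
    (hs : IsPreconnected s) {q : X → ℝ} (hq : ContinuousOn q s) {c : ℝ}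
    (hsq : ∀ x ∈ s, q x ^ 2 = c) {x y : X} (hx : x ∈ s) (hy : y ∈ s) : q x = q y :=
  hs.constant_of_mapsTo (T := {q y, -q y}) (Set.toFinite _).isDiscrete hq
    (fun z hz => sq_eq_sq_iff_eq_or_eq_neg.1 ((hsq z hz).trans (hsq y hy).symm)) hx hy

section InnerProductSpace

variable {E : Type*} [NormedAddCommGroup E] [InnerProductSpace ℝ E]

theorem IsOpen.exists_mul_norm_pow_four_eq {s : Set E} (hs : IsOpen s) (hs' : IsPreconnected s)
    {P : E → ℝ} (hP : DifferentiableOn ℝ P s)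
    (hP' : ∀ x ∈ s, fderiv ℝ P x = (-4 * P x / ‖x‖ ^ 2) • innerSL ℝ x) :
    ∃ c, ∀ x ∈ s, P x * ‖x‖ ^ 4 = c := by
  have hderiv : ∀ x ∈ s, HasFDerivAt (fun y : E => P y * (‖y‖ ^ 2) ^ 2) (0 : E →L[ℝ] ℝ) x := by
    intro x hx
    have hN : HasFDerivAt (fun y : E => (‖y‖ ^ 2) ^ 2)
        ((2 • (‖x‖ ^ 2) ^ 1) • 2 • innerSL ℝ x) x :=
      (hasStrictFDerivAt_norm_sq x).hasFDerivAt.pow 2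
    refine ((hP.differentiableAt (hs.mem_nhds hx)).hasFDerivAt.fun_mul hN).congr_fderiv ?_
    ext v
    rcases eq_or_ne x 0 with rfl | hx0
    · simp
    · simp only [pow_one, nsmul_eq_mul, Nat.cast_ofNat, hP' x hx, neg_mul, add_apply, smul_apply,
        coe_innerSL_apply, smul_eq_mul, zero_apply]
      field_simp
      ring
  obtain ⟨c, hc⟩ := hs.exists_is_const_of_fderiv_eq_zero hs'
    (fun x hx => (hderiv x hx).differentiableAt.differentiableWithinAt)
    (fun x hx => (hderiv x hx).fderiv)
  exact ⟨c, fun x hx => by rw [← hc x hx]; ring⟩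

def radialProfile (V : E → E) (x : E) : ℝ := ⟪V x, x⟫ / ‖x‖ ^ 2

theorem differentiableAt_radialProfile {V : E → E} {x : E} (hV : DifferentiableAt ℝ V x)
    (hx : x ≠ 0) : DifferentiableAt ℝ (radialProfile V) x := by
  have hN : DifferentiableAt ℝ (fun y : E => ‖y‖ ^ 2) x :=
    (hasStrictFDerivAt_norm_sq x).differentiableAt
  unfold radialProfile
  simp_rw [div_eq_mul_inv]
  exact (hV.inner ℝ differentiableAt_id).fun_mul
    (hN.fun_inv (pow_ne_zero 2 (norm_ne_zero_iff.2 hx)))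

theorem radialProfile_smul_of_homogeneous {V : E → E} {x : E} {β l : ℝ} (hl : 0 < l)
    (hom : V (l • x) = l ^ β • V x) :
    radialProfile V (l • x) = l ^ (β - 1) * radialProfile V x := by
  rw [radialProfile, radialProfile, hom, inner_smul_left, inner_smul_right, norm_smul,
    Real.rpow_sub_one hl.ne', Real.norm_of_nonneg hl.le, conj_trivial]
  field_simp

end InnerProductSpace

theorem isPreconnected_compl_zero : IsPreconnected ({0}ᶜ : Set E3) := by
  refine (isConnected_compl_singleton_of_one_lt_rank ?_ 0).isPreconnected
  rw [← Module.finrank_eq_rank, finrank_euclideanSpace_fin]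
  norm_num

theorem eq_smul_of_cross3_eq_zero {u x : E3} (hx : x ≠ 0) (h : cross3 u x = 0) :
    u = (⟪u, x⟫ / ‖x‖ ^ 2) • x := by
  have hc : ∀ i, cross3 u x i = 0 := fun i => by rw [h]; rfl
  obtain ⟨h0, h1, h2⟩ := And.intro (hc 0) (And.intro (hc 1) (hc 2))
  simp only [cross3, vec3, WithLp.equiv_symm_apply, Matrix.cons_val_zero, Matrix.cons_val_one,
    Matrix.cons_val] at h0 h1 h2
  ext i
  rw [PiLp.smul_apply, smul_eq_mul, div_mul_eq_mul_div, eq_div_iff (by positivity),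
    EuclideanSpace.norm_sq_eq, EuclideanSpace.inner_eq_star_dotProduct]
  simp only [Fin.sum_univ_three, dotProduct, Real.norm_eq_abs, sq_abs, Pi.star_apply, star_trivial]
  fin_cases i <;> simp only [Fin.zero_eta, Fin.mk_one, Fin.reduceFinMk]
  · linear_combination x 1 * h2 - x 2 * h1
  · linear_combination x 2 * h0 - x 0 * h2
  · linear_combination x 0 * h1 - x 1 * h0

theorem div3_smul_id {f : E3 → ℝ} {x : E3} (hf : DifferentiableAt ℝ f x) :
    div3 (fun y => f y • y) x = 3 * f x + fderiv ℝ f x x := by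
  have hcoord : ∑ i, x i • e3 i = x := by
    simpa [e3, EuclideanSpace.basisFun_apply, EuclideanSpace.basisFun_repr] using
      (EuclideanSpace.basisFun (Fin 3) ℝ).sum_repr x
  have hD : HasFDerivAt (fun y => f y • y)
      (f x • ContinuousLinearMap.id ℝ E3 + (fderiv ℝ f x).smulRight x) x :=
    hf.hasFDerivAt.smul (hasFDerivAt_id x)
  have hfx : fderiv ℝ f x x = ∑ i, fderiv ℝ f x (e3 i) * x i := by
    conv_lhs => arg 2; rw [← hcoord]
    simp only [map_sum, map_smul, smul_eq_mul, mul_comm]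
  rw [div3, hD.fderiv, hfx]
  simp only [e3, add_apply, smul_apply,
    ContinuousLinearMap.id_apply, ContinuousLinearMap.smulRight_apply, PiLp.add_apply,
    PiLp.smul_apply, PiLp.single_eq_same, smul_eq_mul, mul_one, Fin.sum_univ_three]
  ring

namespace IsHomogEuler

variable {α : ℝ} {V : E3 → E3} {P : E3 → ℝ} {x y : E3}

theorem differentiableAt_velocity (h : IsHomogEuler α V P) (hx : x ≠ 0) :
    DifferentiableAt ℝ V x :=
  (h.contV.differentiableOn one_ne_zero).differentiableAt (isOpen_compl_singleton.mem_nhds hx)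

theorem differentiableAt_pressure (h : IsHomogEuler α V P) (hx : x ≠ 0) :
    DifferentiableAt ℝ P x :=
  (h.contP.differentiableOn one_ne_zero).differentiableAt (isOpen_compl_singleton.mem_nhds hx)

variable (hrad : ∀ x : E3, x ≠ 0 → cross3 (V x) x = 0)
include hrad

theorem eq_radialProfile_smul (hx : x ≠ 0) : V x = radialProfile V x • x :=
  eq_smul_of_cross3_eq_zero hx (hrad x hx)

theorem two_sub_mul_radialProfile (h : IsHomogEuler α V P) (hx : x ≠ 0) :
    (2 - α) * radialProfile V x = 0 := by
  have hf := differentiableAt_radialProfile (h.differentiableAt_velocity hx) hx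
  have hEuler : fderiv ℝ (radialProfile V) x x = (-α - 1) * radialProfile V x :=
    fderiv_apply_self_of_homogeneous_s19 _ hf
      fun l hl => radialProfile_smul_of_homogeneous hl (h.homV l hl x hx)
  have hV : V =ᶠ[𝓝 x] fun y => radialProfile V y • y :=
    Filter.eventually_of_mem (isOpen_compl_singleton.mem_nhds hx)
      fun y hy => eq_radialProfile_smul hrad hy
  have hdiv := h.divFree x hx
  rw [div3, hV.fderiv_eq, ← div3, div3_smul_id hf, hEuler] at hdiv
  linear_combination hdiv

theorem fderiv_pressure_eq (h : IsHomogEuler 2 V P) (hx : x ≠ 0) :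
    fderiv ℝ P x = (2 * radialProfile V x ^ 2) • innerSL ℝ x := by
  have hVV : fderiv ℝ V x x = (-2 : ℝ) • V x :=
    fderiv_apply_self_of_homogeneous_s19 _ (h.differentiableAt_velocity hx)
      fun l hl => h.homV l hl x hx
  have hgrad : gradient P x = (2 * radialProfile V x ^ 2) • x := by
    rw [eq_neg_of_add_eq_zero_right (h.euler x hx), eq_radialProfile_smul hrad hx, map_smul,
      hVV, eq_radialProfile_smul hrad hx, smul_smul, smul_smul, ← neg_smul]
    ring_nf
  ext v
  rw [← inner_gradient_left, hgrad, real_inner_smul_left, smul_apply, innerSL_apply_apply,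
    smul_eq_mul]

theorem pressure_eq (h : IsHomogEuler 2 V P) (hx : x ≠ 0) :
    P x = -(radialProfile V x ^ 2 * ‖x‖ ^ 2) / 2 := by
  have hEuler : fderiv ℝ P x x = -(2 * 2) * P x :=
    fderiv_apply_self_of_homogeneous_s19 _ (h.differentiableAt_pressure hx)
      fun l hl => h.homP l hl x hx
  rw [fderiv_pressure_eq hrad h hx, smul_apply, innerSL_apply_apply,
    real_inner_self_eq_norm_sq, smul_eq_mul] at hEuler
  linear_combination hEuler / 4

theorem radialProfile_mul_norm_pow_three_eq (h : IsHomogEuler 2 V P) (hx : x ≠ 0)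
    (hy : y ≠ 0) : radialProfile V x * ‖x‖ ^ 3 = radialProfile V y * ‖y‖ ^ 3 := by
  obtain ⟨c, hc⟩ := isOpen_compl_singleton.exists_mul_norm_pow_four_eq isPreconnected_compl_zero
    (fun z hz => (h.differentiableAt_pressure hz).differentiableWithinAt)
    fun z (hz : z ≠ 0) => by
      have : ‖z‖ ≠ 0 := norm_ne_zero_iff.2 hz
      rw [fderiv_pressure_eq hrad h hz, pressure_eq hrad h hz]
      congr 1
      field_simp
      ring
  have hcont : ContinuousOn (fun z => radialProfile V z * ‖z‖ ^ 3) {0}ᶜ := fun z hz =>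
    ((differentiableAt_radialProfile (h.differentiableAt_velocity hz) hz).continuousAt.mul
      (continuous_norm.pow 3).continuousAt).continuousWithinAt
  refine isPreconnected_compl_zero.eq_of_sq_eq_const hcont (c := -2 * c) (fun z hz => ?_) hx hy
  rw [← hc z hz, pressure_eq hrad h hz]
  ring

end IsHomogEuler

/-- a nontrivial radial homogeneous solution exists only for
`α = 2` and is given by the explicit point-source formula. -/
theorem stmt19 (α : ℝ) (V : E3 → E3) (P : E3 → ℝ) (h : IsHomogEuler α V P)
    (hrad : ∀ x : E3, x ≠ 0 → cross3 (V x) x = 0)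
    (hne : ∃ x : E3, x ≠ 0 ∧ V x ≠ 0) :
    α = 2 ∧ ∃ κ : ℝ, κ ≠ 0 ∧ ∀ x : E3, x ≠ 0 →
      V x = (κ / ‖x‖ ^ 3) • x ∧ P x = -κ ^ 2 / (2 * ‖x‖ ^ 4) := by
  obtain ⟨x₀, hx₀, hV₀⟩ := hne
  have hf₀ : radialProfile V x₀ ≠ 0 := fun h0 => hV₀ <| by
    rw [IsHomogEuler.eq_radialProfile_smul hrad hx₀, h0, zero_smul]
  obtain rfl : α = 2 := by
    have := (mul_eq_zero.1 (h.two_sub_mul_radialProfile hrad hx₀)).resolve_right hf₀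
    linarith
  let κ := radialProfile V x₀ * ‖x₀‖ ^ 3
  have hf : ∀ x : E3, x ≠ 0 → radialProfile V x = κ / ‖x‖ ^ 3 := fun x hx => by
    rw [eq_div_iff (by positivity)]
    exact h.radialProfile_mul_norm_pow_three_eq hrad hx hx₀
  refine ⟨rfl, κ, mul_ne_zero hf₀ (by positivity), fun x hx => ⟨?_, ?_⟩⟩
  · rw [IsHomogEuler.eq_radialProfile_smul hrad hx, hf x hx]
  · have : ‖x‖ ≠ 0 := norm_ne_zero_iff.2 hx
    rw [h.pressure_eq hrad hx, hf x hx]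
    field_simp
end
end
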